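/- Let T be finite, π a probability distribution with π(t) > 0 for all t, p ∈ (0,1], and suppose the mechanism Q_{t'}(t) = (1-p)·[t=t'] + p·π(t) satisfies (ε', 0)-differential privacy for some ε' ≥ 0, i.e., Q_{t'}(t) ≤ exp(ε')·Q_{t''}(t) for all t, t', t''. If |T| ≥ 2, then ε' ≥ max_t log((1-p+p·π(t))/(p·π(t))) where the max is taken over tokens t that are not the unique element of T; in particular the ε of the paper's lemma is the minimal DP parameter of the mechanism. -/

import Mathlib

/-- Two-sided `(ε, 0)`-DP also forces `Q t' t > 0`, so the logarithm below sees a genuine ratio. -/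
theorem log_div_le_of_forall_le_exp_mul {α β : Type*} {Q : α → β → ℝ} {ε : ℝ}
    (hDP : ∀ t t' t'', Q t' t ≤ Real.exp ε * Q t'' t) {t : β} (t' : α) {t'' : α}
    (hpos : 0 < Q t'' t) : Real.log (Q t' t / Q t'' t) ≤ ε := by
  have hpos' : 0 < Q t' t := pos_of_mul_pos_right (hpos.trans_le (hDP t t'' t')) (Real.exp_pos ε).le
  rw [Real.log_le_iff_le_exp (div_pos hpos' hpos), div_le_iff₀ hpos]
  exact hDP t t' t''

theorem stmt_16_general {T : Type*} [Fintype T] [DecidableEq T]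
    (hcard : 2 ≤ Fintype.card T)
    (π : T → ℝ) (hπ : ∀ t, 0 < π t)
    (p : ℝ) (hp : 0 < p)
    (Q : T → T → ℝ)
    (hQ : ∀ t' t, Q t' t = (1 - p) * (if t = t' then 1 else 0) + p * π t)
    (ε' : ℝ)
    (hDP : ∀ t t' t'', Q t' t ≤ Real.exp ε' * Q t'' t) :
    (⨆ t, Real.log ((1 - p + p * π t) / (p * π t))) ≤ ε' := by
  have : Nonempty T := Fintype.card_pos_iff.mp (by omega)
  refine ciSup_le fun t => ?_
  obtain ⟨t'', ht''⟩ := Fintype.exists_ne_of_one_lt_card (by omega) t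
  have hQ_self : Q t t = 1 - p + p * π t := by simp [hQ]
  have hQ_ne : Q t'' t = p * π t := by simp [hQ, ht''.symm]
  rw [← hQ_self, ← hQ_ne]
  exact log_div_le_of_forall_le_exp_mul hDP t (hQ_ne ▸ mul_pos hp (hπ t))

theorem stmt_16 {T : Type*} [Fintype T] [DecidableEq T]
    (hcard : 2 ≤ Fintype.card T)
    (π : T → ℝ) (hπ : ∀ t, 0 < π t) (hsum : ∑ t, π t = 1)
    (p : ℝ) (hp : 0 < p) (hp1 : p ≤ 1)
    (Q : T → T → ℝ)
    (hQ : ∀ t' t, Q t' t = (1 - p) * (if t = t' then 1 else 0) + p * π t)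
    (ε' : ℝ) (hε' : 0 ≤ ε')
    (hDP : ∀ t t' t'', Q t' t ≤ Real.exp ε' * Q t'' t) :
    (⨆ t, Real.log ((1 - p + p * π t) / (p * π t))) ≤ ε' :=
  stmt_16_general hcard π hπ p hp Q hQ ε' hDP
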